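/- Let M, N be positive natural numbers and let d be a dataset of N instances with M binary protected attributes, where each instance carries both a true binary label and a predicted binary label. Suppose every vertex (level-0 hypercube) contains at least one instance, and suppose at least one instance is correctly classified (true label equals predicted label). Then the worst-case accuracy ratio Acc_ratio(K) = Acc_min(K)/Acc_max(K) is monotonically increasing in K, and the worst-case accuracy difference Acc_diff(K) = Acc_max(K) − Acc_min(K) is monotonically decreasing in K: for every K with 1 ≤ K ≤ M, Acc_ratio(K-1) ≤ Acc_ratio(K) and Acc_diff(K) ≤ Acc_diff(K-1). -/

import Mathlib

/-- An attribute vector `v` belongs to the hypercube `x` if it matches all specified coordinates. -/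
def Belongs {M : ℕ} (x : Fin M → Option Bool) (v : Fin M → Bool) : Prop :=
  ∀ i : Fin M, ∀ b : Bool, x i = some b → v i = b

instance {M : ℕ} (x : Fin M → Option Bool) (v : Fin M → Bool) : Decidable (Belongs x v) := by
  unfold Belongs; infer_instance

/-- The level of a hypercube: the number of its stars (unspecified coordinates). -/
def level {M : ℕ} (x : Fin M → Option Bool) : ℕ :=
  (Finset.univ.filter fun i => x i = none).card

/-- The finset of all hypercubes of level `K`. -/
def levelSet (M K : ℕ) : Finset (Fin M → Option Bool) :=
  Finset.univ.filter fun x => level x = K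

/-- N(x): the number of instances of the dataset `d` (with true and predicted labels)
whose attribute vector belongs to `x`. -/
def cnt {M N : ℕ} (d : Fin N → (Fin M → Bool) × Bool × Bool) (x : Fin M → Option Bool) : ℕ :=
  (Finset.univ.filter fun n => Belongs x (d n).1).card

/-- The number of correctly classified instances (true label = predicted label) in `x`. -/
def cntCorrect {M N : ℕ} (d : Fin N → (Fin M → Bool) × Bool × Bool)
    (x : Fin M → Option Bool) : ℕ :=
  (Finset.univ.filter fun n => Belongs x (d n).1 ∧ (d n).2.1 = (d n).2.2).card

/-- The accuracy of hypercube `x`: Acc(x) = (number of correct instances in x)/N(x). -/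
def accuracy {M N : ℕ} (d : Fin N → (Fin M → Bool) × Bool × Bool)
    (x : Fin M → Option Bool) : ℚ :=
  (cntCorrect d x : ℚ) / (cnt d x : ℚ)

/-- Acc_min(K): minimum accuracy over all hypercubes of level `K`
(the level set is nonempty whenever `K ≤ M`, so the junk value `0` is never used there). -/
def accuracyMin {M N : ℕ} (d : Fin N → (Fin M → Bool) × Bool × Bool) (K : ℕ) : ℚ :=
  WithTop.untopD 0 (((levelSet M K).image (accuracy d)).min)

/-- Acc_max(K): maximum accuracy over all hypercubes of level `K`. -/
def accuracyMax {M N : ℕ} (d : Fin N → (Fin M → Bool) × Bool × Bool) (K : ℕ) : ℚ :=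
  WithBot.unbotD 0 (((levelSet M K).image (accuracy d)).max)

/-- The worst-case accuracy ratio at level K. -/
def accuracyRatio {M N : ℕ} (d : Fin N → (Fin M → Bool) × Bool × Bool) (K : ℕ) : ℚ :=
  accuracyMin d K / accuracyMax d K

/-- The worst-case accuracy difference at level K. -/
def accuracyDiff {M N : ℕ} (d : Fin N → (Fin M → Bool) × Bool × Bool) (K : ℕ) : ℚ :=
  accuracyMax d K - accuracyMin d K

/-!
A hypercube `x` with a star at `i` is the disjoint union of the two hypercubes of one level lower
obtained by fixing coordinate `i` to `false` or to `true`. Both the instance count and the count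
of correctly classified instances are additive over this split, so `Acc x` is the mediant of the
accuracies of the two halves and lies between them (every hypercube contains a vertex, hence is
nonempty). Therefore `Acc_min` can only grow and `Acc_max` only shrink when the level goes up.
As `0 ≤ Acc_min ≤ Acc_max`, the ratio claim needs no positivity of `Acc_max`: where it vanishes,
both ratios are `0`.
-/

open Finset Function

section OrderedField

variable {α : Type*} [Field α] [LinearOrder α] [IsStrictOrderedRing α]

theorem div_le_div_of_le_of_le_of_le {a b c e : α} (ha : 0 ≤ a) (hac : a ≤ c) (hce : c ≤ e)
    (heb : e ≤ b) : a / b ≤ c / e := by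
  rcases (ha.trans (hac.trans hce)).eq_or_lt with he | he
  · obtain rfl : c = 0 := by linarith
    obtain rfl : a = 0 := by linarith
    simp
  · exact div_le_div₀ (ha.trans hac) hac he heb

theorem min_div_le_add_div_add (a c : α) {b e : α} (hb : 0 < b) (he : 0 < e) :
    min (a / b) (c / e) ≤ (a + c) / (b + e) := by
  rw [le_div_iff₀ (add_pos hb he), mul_add]
  exact add_le_add ((le_div_iff₀ hb).mp (min_le_left _ _))
    ((le_div_iff₀ he).mp (min_le_right _ _))

theorem add_div_add_le_max_div (a c : α) {b e : α} (hb : 0 < b) (he : 0 < e) :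
    (a + c) / (b + e) ≤ max (a / b) (c / e) := by
  rw [div_le_iff₀ (add_pos hb he), mul_add]
  exact add_le_add ((div_le_iff₀ hb).mp (le_max_left _ _))
    ((div_le_iff₀ he).mp (le_max_right _ _))

end OrderedField

section Hypercube

variable {M : ℕ}

theorem belongs_update_some_iff {x : Fin M → Option Bool} {i : Fin M} (hx : x i = none)
    (b : Bool) (v : Fin M → Bool) :
    Belongs (update x i (some b)) v ↔ Belongs x v ∧ v i = b := by
  refine ⟨fun h => ⟨fun j c hj => h j c ?_, h i b (update_self ..)⟩, ?_⟩
  · rwa [update_of_ne (by rintro rfl; simp [hx] at hj)]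
  · rintro ⟨h, rfl⟩ j c hj
    rcases eq_or_ne j i with rfl | hji
    · simpa using hj
    · exact h j c (by rwa [update_of_ne hji] at hj)

theorem belongs_getD (x : Fin M → Option Bool) (b : Bool) :
    Belongs x fun i => (x i).getD b := by
  intro i c hc
  simp [hc]

theorem level_update_some {x : Fin M → Option Bool} {i : Fin M} (hx : x i = none) (b : Bool) :
    level (update x i (some b)) = level x - 1 := by
  have hstars : (univ.filter fun j => update x i (some b) j = none)
      = (univ.filter fun j => x j = none).erase i := by
    ext j
    rcases eq_or_ne j i with rfl | hji <;> simp [update_apply, *]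
  rw [level, level, hstars, card_erase_of_mem (by simpa using hx)]

theorem exists_star_of_level_pos {x : Fin M → Option Bool} (hx : 0 < level x) :
    ∃ i, x i = none := by
  obtain ⟨i, hi⟩ := card_pos.mp hx
  exact ⟨i, (mem_filter.mp hi).2⟩

theorem levelSet_nonempty {K : ℕ} (hKM : K ≤ M) : (levelSet M K).Nonempty := by
  obtain ⟨s, -, hs⟩ := exists_subset_card_eq (s := (univ : Finset (Fin M))) (by simpa using hKM)
  have hstars : (univ.filter fun i => (if i ∈ s then none else some false : Option Bool) = none)
      = s := by
    ext; simp
  exact ⟨_, mem_filter.mpr ⟨mem_univ _, by rw [level, hstars, hs]⟩⟩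

end Hypercube

theorem update_some_mem_levelSet {M K : ℕ} {x : Fin M → Option Bool} (hx : x ∈ levelSet M K)
    {i : Fin M} (hi : x i = none) (b : Bool) : update x i (some b) ∈ levelSet M (K - 1) :=
  mem_filter.mpr ⟨mem_univ _, by rw [level_update_some hi, (mem_filter.mp hx).2]⟩

section Counting

variable {M N : ℕ}

theorem card_filter_belongs_eq_add {ι : Type*} (s : Finset ι) (f : ι → Fin M → Bool)
    {x : Fin M → Option Bool} {i : Fin M} (hx : x i = none) :
    #(s.filter fun n => Belongs x (f n))
      = #(s.filter fun n => Belongs (update x i (some false)) (f n))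
        + #(s.filter fun n => Belongs (update x i (some true)) (f n)) := by
  rw [← card_filter_add_card_filter_not (s := s.filter _) (fun n => f n i = false),
    filter_filter, filter_filter]
  congr 2 <;> ext n <;> simp [belongs_update_some_iff hx]

theorem cnt_eq_add (d : Fin N → (Fin M → Bool) × Bool × Bool)
    {x : Fin M → Option Bool} {i : Fin M} (hx : x i = none) :
    cnt d x = cnt d (update x i (some false)) + cnt d (update x i (some true)) :=
  card_filter_belongs_eq_add _ _ hx

theorem cntCorrect_eq_add (d : Fin N → (Fin M → Bool) × Bool × Bool)
    {x : Fin M → Option Bool} {i : Fin M} (hx : x i = none) :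
    cntCorrect d x
      = cntCorrect d (update x i (some false)) + cntCorrect d (update x i (some true)) := by
  simpa only [cntCorrect, filter_filter, and_comm]
    using card_filter_belongs_eq_add (univ.filter fun n => (d n).2.1 = (d n).2.2) (d · |>.1) hx

theorem cnt_pos (d : Fin N → (Fin M → Bool) × Bool × Bool)
    (hvert : ∀ v : Fin M → Bool, 0 < cnt d (fun i => some (v i))) (x : Fin M → Option Bool) :
    0 < cnt d x := by
  refine (hvert fun i => (x i).getD false).trans_le (card_le_card (monotone_filter_right _ ?_))
  intro n _ hn
  rw [funext fun i => hn i _ rfl]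
  exact belongs_getD x false

end Counting

section Accuracy

variable {M N : ℕ} (d : Fin N → (Fin M → Bool) × Bool × Bool)

theorem accuracy_nonneg (x : Fin M → Option Bool) : 0 ≤ accuracy d x := by
  unfold accuracy
  positivity

theorem accuracy_eq_add_div_add {x : Fin M → Option Bool} {i : Fin M} (hx : x i = none) :
    accuracy d x
      = (cntCorrect d (update x i (some false)) + cntCorrect d (update x i (some true)) : ℚ)
        / (cnt d (update x i (some false)) + cnt d (update x i (some true)) : ℚ) := by
  rw [accuracy, cnt_eq_add d hx, cntCorrect_eq_add d hx]
  push_cast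
  rfl

theorem min_accuracy_update_le (hvert : ∀ v : Fin M → Bool, 0 < cnt d (fun i => some (v i)))
    {x : Fin M → Option Bool} {i : Fin M} (hx : x i = none) :
    min (accuracy d (update x i (some false))) (accuracy d (update x i (some true)))
      ≤ accuracy d x := by
  rw [accuracy_eq_add_div_add d hx]
  exact min_div_le_add_div_add _ _ (mod_cast cnt_pos d hvert _) (mod_cast cnt_pos d hvert _)

theorem accuracy_le_max_accuracy_update
    (hvert : ∀ v : Fin M → Bool, 0 < cnt d (fun i => some (v i)))
    {x : Fin M → Option Bool} {i : Fin M} (hx : x i = none) :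
    accuracy d x
      ≤ max (accuracy d (update x i (some false))) (accuracy d (update x i (some true))) := by
  rw [accuracy_eq_add_div_add d hx]
  exact add_div_add_le_max_div _ _ (mod_cast cnt_pos d hvert _) (mod_cast cnt_pos d hvert _)

variable {d} {K : ℕ}

theorem accuracyMin_eq_min' (h : ((levelSet M K).image (accuracy d)).Nonempty) :
    accuracyMin d K = ((levelSet M K).image (accuracy d)).min' h := by
  rw [accuracyMin, ← coe_min' h, WithTop.untopD_coe]

theorem accuracyMax_eq_max' (h : ((levelSet M K).image (accuracy d)).Nonempty) :
    accuracyMax d K = ((levelSet M K).image (accuracy d)).max' h := by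
  rw [accuracyMax, ← coe_max' h, WithBot.unbotD_coe]

theorem accuracyMin_le_accuracy {x : Fin M → Option Bool} (hx : x ∈ levelSet M K) :
    accuracyMin d K ≤ accuracy d x := by
  rw [accuracyMin_eq_min' ⟨_, mem_image_of_mem _ hx⟩]
  exact min'_le _ _ (mem_image_of_mem _ hx)

theorem accuracy_le_accuracyMax {x : Fin M → Option Bool} (hx : x ∈ levelSet M K) :
    accuracy d x ≤ accuracyMax d K := by
  rw [accuracyMax_eq_max' ⟨_, mem_image_of_mem _ hx⟩]
  exact le_max' _ _ (mem_image_of_mem _ hx)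

theorem le_accuracyMin {a : ℚ} (hK : (levelSet M K).Nonempty)
    (h : ∀ x ∈ levelSet M K, a ≤ accuracy d x) : a ≤ accuracyMin d K := by
  rw [accuracyMin_eq_min' (hK.image _)]
  exact le_min' _ _ _ (forall_mem_image.mpr h)

theorem accuracyMax_le {a : ℚ} (hK : (levelSet M K).Nonempty)
    (h : ∀ x ∈ levelSet M K, accuracy d x ≤ a) : accuracyMax d K ≤ a := by
  rw [accuracyMax_eq_max' (hK.image _)]
  exact max'_le _ _ _ (forall_mem_image.mpr h)

theorem accuracyMin_nonneg (hKM : K ≤ M) : 0 ≤ accuracyMin d K :=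
  le_accuracyMin (levelSet_nonempty hKM) fun x _ => accuracy_nonneg d x

theorem accuracyMin_le_accuracyMax (hKM : K ≤ M) : accuracyMin d K ≤ accuracyMax d K :=
  have ⟨_, hx⟩ := levelSet_nonempty (M := M) hKM
  (accuracyMin_le_accuracy hx).trans (accuracy_le_accuracyMax hx)

theorem accuracyMin_sub_one_le (hvert : ∀ v : Fin M → Bool, 0 < cnt d (fun i => some (v i)))
    (hK1 : 1 ≤ K) (hKM : K ≤ M) : accuracyMin d (K - 1) ≤ accuracyMin d K := by
  refine le_accuracyMin (levelSet_nonempty hKM) fun x hx => ?_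
  obtain ⟨i, hi⟩ := exists_star_of_level_pos ((mem_filter.mp hx).2 ▸ hK1)
  exact (le_min (accuracyMin_le_accuracy (update_some_mem_levelSet hx hi false))
    (accuracyMin_le_accuracy (update_some_mem_levelSet hx hi true))).trans
    (min_accuracy_update_le d hvert hi)

theorem accuracyMax_le_sub_one (hvert : ∀ v : Fin M → Bool, 0 < cnt d (fun i => some (v i)))
    (hK1 : 1 ≤ K) (hKM : K ≤ M) : accuracyMax d K ≤ accuracyMax d (K - 1) := by
  refine accuracyMax_le (levelSet_nonempty hKM) fun x hx => ?_
  obtain ⟨i, hi⟩ := exists_star_of_level_pos ((mem_filter.mp hx).2 ▸ hK1)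
  exact (accuracy_le_max_accuracy_update d hvert hi).trans
    (max_le (accuracy_le_accuracyMax (update_some_mem_levelSet hx hi false))
      (accuracy_le_accuracyMax (update_some_mem_levelSet hx hi true)))

end Accuracy

theorem accuracyRatio_accuracyDiff_mono_general (M N : ℕ)
    (d : Fin N → (Fin M → Bool) × Bool × Bool)
    (hvert : ∀ v : Fin M → Bool, 0 < cnt d (fun i => some (v i)))
    (K : ℕ) (hK1 : 1 ≤ K) (hKM : K ≤ M) :
    accuracyRatio d (K - 1) ≤ accuracyRatio d K ∧
      accuracyDiff d K ≤ accuracyDiff d (K - 1) := by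
  have hmin := accuracyMin_sub_one_le hvert hK1 hKM
  have hmax := accuracyMax_le_sub_one hvert hK1 hKM
  exact ⟨div_le_div_of_le_of_le_of_le (accuracyMin_nonneg (K.sub_le 1 |>.trans hKM)) hmin
      (accuracyMin_le_accuracyMax hKM) hmax,
    sub_le_sub hmax hmin⟩

/-- If every vertex contains at least one instance and at least one instance
is correctly classified, the worst-case accuracy ratio is monotonically increasing and the
worst-case accuracy difference is monotonically decreasing in the level. -/
theorem accuracyRatio_accuracyDiff_mono (M N : ℕ) (hM : 0 < M) (hN : 0 < N)
    (d : Fin N → (Fin M → Bool) × Bool × Bool)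
    (hvert : ∀ v : Fin M → Bool, 0 < cnt d (fun i => some (v i)))
    (hcorrect : ∃ n : Fin N, (d n).2.1 = (d n).2.2)
    (K : ℕ) (hK1 : 1 ≤ K) (hKM : K ≤ M) :
    accuracyRatio d (K - 1) ≤ accuracyRatio d K ∧
      accuracyDiff d K ≤ accuracyDiff d (K - 1) :=
  accuracyRatio_accuracyDiff_mono_general M N d hvert K hK1 hKM
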